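/- arXiv:1609.03198 — 2 statements merged into one kernel-verified Lean document; each statement's English description precedes it below -/
import Mathlib

section
/- For every countable ordinal α, every interval [a,b] with a<b, and every real r>0, there exists f ∈ Den[a,b] with ∫_a^b f = 0 and f(a)=f(b)=0 such that the function F(x)=∫_a^x f satisfies ω(F,[a,b]) = r and a,b ∈ D_F^α([a,b]). In particular, for every countable ordinal α there exists f ∈ Den[a,b] whose indefinite Denjoy integral F satisfies: the least ordinal β with D_F^β([a,b]) = D_F^{β+1}([a,b]) is strictly greater than α. -/
open MeasureTheory Set Filter

noncomputable section

attribute [local instance] Classical.propDecidable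

/-- The oscillation `ω(F, J)` of `F` on the set `J`. -/
def osc (F : ℝ → ℝ) (J : Set ℝ) : ℝ :=
  sSup {d : ℝ | ∃ x ∈ J, ∃ y ∈ J, d = |F x - F y|}

/-- `D` is a `K`-edged pre-partition of `[a,b]`: a finite nonempty collection of
pairwise non-overlapping closed subintervals of `[a,b]` whose endpoints lie in `K`. -/
def IsPrePartition (a b : ℝ) (K : Set ℝ) (D : Finset (ℝ × ℝ)) : Prop :=
  D.Nonempty ∧
  (∀ p ∈ D, p.1 ≤ p.2 ∧ p.1 ∈ K ∧ p.2 ∈ K ∧ Icc p.1 p.2 ⊆ Icc a b) ∧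
  (D : Set (ℝ × ℝ)).Pairwise fun p q => p.2 ≤ q.1 ∨ q.2 ≤ p.1

/-- `F ∈ AC_*(K)`: absolute continuity in the restricted sense on `K`. -/
def ACStar (a b : ℝ) (F : ℝ → ℝ) (K : Set ℝ) : Prop :=
  ∀ ε > (0:ℝ), ∃ δ > (0:ℝ), ∀ D : Finset (ℝ × ℝ), IsPrePartition a b K D →
    (∑ p ∈ D, (p.2 - p.1)) < δ → (∑ p ∈ D, osc F (Icc p.1 p.2)) < ε

/-- `F ∈ ACG_*(K)`: `K` is a countable union of closed sets `Kₙ ⊆ [a,b]` with `F ∈ AC_*(Kₙ)`. -/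
def ACGStar (a b : ℝ) (F : ℝ → ℝ) (K : Set ℝ) : Prop :=
  ∃ C : ℕ → Set ℝ, (∀ n, IsClosed (C n) ∧ C n ⊆ Icc a b ∧ ACStar a b F (C n)) ∧
    K = ⋃ n, C n

/-- `F` is the indefinite Denjoy integral of `f` on `[a,b]`:
`F` is continuous on `[a,b]`, `F(a) = 0`, `F ∈ ACG_*([a,b])`, and `F' = f` a.e. on `[a,b]`. -/
def HasDenjoyIntegralFn (a b : ℝ) (f F : ℝ → ℝ) : Prop :=
  ContinuousOn F (Icc a b) ∧ F a = 0 ∧ ACGStar a b F (Icc a b) ∧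
    ∀ᵐ x ∂(volume.restrict (Icc a b)), HasDerivAt F (f x) x

/-- `f ∈ Den[a,b]`: `f` is Denjoy integrable on `[a,b]`. -/
def DenjoyIntegrable (a b : ℝ) (f : ℝ → ℝ) : Prop :=
  ∃ F : ℝ → ℝ, HasDenjoyIntegralFn a b f F

/-- The Denjoy integral `∫_a^b f` (junk value `0` if `f` is not Denjoy integrable). -/
def denjoyIntegral (a b : ℝ) (f : ℝ → ℝ) : ℝ :=
  if h : DenjoyIntegrable a b f then Classical.choose h b else 0

/-- The derivative `D_f(K)`: points of `K` at which `f` is not locally Lebesgue integrable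
relative to `K`. -/
def Df (f : ℝ → ℝ) (K : Set ℝ) : Set ℝ :=
  {x ∈ K | ∀ c d : ℝ, c < x → x < d → ¬ IntegrableOn f (Icc c d ∩ K) volume}

/-- The derivative `D_F(K)`: points of `K` at which `F` is not locally `AC_*` relative to `K`. -/
def DF (a b : ℝ) (F : ℝ → ℝ) (K : Set ℝ) : Set ℝ :=
  {x ∈ K | ∀ c d : ℝ, c < x → x < d → ¬ ACStar a b F (Icc c d ∩ K)}

/-- The derivative `D_{f,F}(K) = D_f(K) ∪ D_F(K)`. -/
def DfF (a b : ℝ) (f F : ℝ → ℝ) (K : Set ℝ) : Set ℝ := Df f K ∪ DF a b F K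

/-- Transfinite iterates of a derivative operation on sets:
`D⁰(K) = K`, `D^(α+1)(K) = D(D^α(K))`, and `D^α(K) = ⋂_(β<α) D^β(K)` for limit `α`. -/
def derivIter (D : Set ℝ → Set ℝ) (K : Set ℝ) (α : Ordinal.{0}) : Set ℝ :=
  Ordinal.limitRecOn α K (fun _ ih => D ih) (fun o _ ih => ⋂ β : Iio o, ih β.1 β.2)

/-- `D^∞(K) = ⋂_(α<ω₁) D^α(K)`. -/
def derivInfty (D : Set ℝ → Set ℝ) (K : Set ℝ) : Set ℝ :=
  ⋂ (α : Ordinal.{0}) (_ : α.card ≤ Cardinal.aleph0), derivIter D K α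


/-!
By transfinite induction on `α`, every interval `[a, b]` carries, for every `r > 0`, a
nonnegative Denjoy primitive `F` of height `r` vanishing at `a` and `b` with
`a, b ∈ D_F^α([a, b])`. For `α = 0` take `r sin²(π (x - a) / (b - a))`. For `α > 0` cut `(a, b)`
into countably many intervals accumulating only at `a` and `b`, enumerate the ordinals below `α`
as `γ₀, γ₁, …`, and glue into the interval with index `n`, `|n| = pair i j`, a bump of rank `γᵢ`
and height `r / ((i + 1) (j + 1))`. The heights tend to `0`, so the glued function is continuous
and `ACG_*`. For each `i`, however, the intervals of rank `γᵢ` accumulate at `a` and at `b` with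
harmonically divergent oscillations, so `F` is not `AC_*` on `D_F^{γᵢ}` near `a` or `b`, that is
`a, b ∈ D_F^{γᵢ + 1}`.

For the rank bound: by Baire's theorem an `ACG_*` function admits no nonempty closed `K` with
`D_F(K) = K`, so the iterates of `D_F` can only stabilise at `∅`; as `a ∈ D_F^{α + 1}`, this
happens only after `α`.
-/

open Topology Real

lemma osc_le {F : ℝ → ℝ} {J : Set ℝ} {B : ℝ} (hB : 0 ≤ B)
    (h : ∀ x ∈ J, ∀ y ∈ J, |F x - F y| ≤ B) : osc F J ≤ B :=
  Real.sSup_le (by rintro _ ⟨x, hx, y, hy, rfl⟩; exact h x hx y hy) hB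

lemma le_osc {F : ℝ → ℝ} {J : Set ℝ} {B : ℝ} (h : ∀ x ∈ J, ∀ y ∈ J, |F x - F y| ≤ B)
    {x y : ℝ} (hx : x ∈ J) (hy : y ∈ J) : |F x - F y| ≤ osc F J :=
  le_csSup ⟨B, by rintro _ ⟨u, hu, v, hv, rfl⟩; exact h u hu v hv⟩ ⟨x, hx, y, hy, rfl⟩

lemma osc_nonneg (F : ℝ → ℝ) (J : Set ℝ) : 0 ≤ osc F J :=
  Real.sSup_nonneg (by rintro _ ⟨x, -, y, -, rfl⟩; exact abs_nonneg _)

lemma osc_congr {F G : ℝ → ℝ} {J : Set ℝ} (h : EqOn F G J) : osc F J = osc G J := by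
  unfold osc
  congr! 3 with d
  exact ⟨fun ⟨x, hx, y, hy, hd⟩ => ⟨x, hx, y, hy, by rw [hd, h hx, h hy]⟩,
    fun ⟨x, hx, y, hy, hd⟩ => ⟨x, hx, y, hy, by rw [hd, ← h hx, ← h hy]⟩⟩

lemma sum_sub_le_sub_of_pairwise {ι : Type*} (S : Finset ι) {u v : ι → ℝ} {c d : ℝ}
    (huv : ∀ j ∈ S, u j ≤ v j) (hsub : ∀ j ∈ S, c ≤ u j ∧ v j ≤ d)
    (hS : (S : Set ι).Pairwise fun i j => v i ≤ u j ∨ v j ≤ u i) (hcd : c ≤ d) :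
    ∑ j ∈ S, (v j - u j) ≤ d - c := by
  have hdisj : (S : Set ι).PairwiseDisjoint fun j => Ioo (u j) (v j) := by
    intro i hi j hj hij
    have key : ∀ {i j}, v i ≤ u j → Disjoint (Ioo (u i) (v i)) (Ioo (u j) (v j)) := fun h =>
      (Iic_disjoint_Ioi h).mono (Ioo_subset_Iio_self.trans Iio_subset_Iic_self) Ioo_subset_Ioi_self
    exact (hS hi hj hij).elim key fun h => (key h).symm
  have : ENNReal.ofReal (∑ j ∈ S, (v j - u j)) ≤ ENNReal.ofReal (d - c) :=
    calc ENNReal.ofReal (∑ j ∈ S, (v j - u j))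
        = ∑ j ∈ S, volume (Ioo (u j) (v j)) := by
          rw [ENNReal.ofReal_sum_of_nonneg fun j hj => sub_nonneg.2 (huv j hj)]
          simp only [Real.volume_Ioo]
      _ = volume (⋃ j ∈ S, Ioo (u j) (v j)) :=
          (measure_biUnion_finset hdisj fun _ _ => measurableSet_Ioo).symm
      _ ≤ volume (Ioo c d) := measure_mono <| iUnion₂_subset fun j hj =>
          Ioo_subset_Ioo (hsub j hj).1 (hsub j hj).2
      _ = ENNReal.ofReal (d - c) := Real.volume_Ioo
  exact (ENNReal.ofReal_le_ofReal_iff'.1 this).elim id fun h => h.trans (sub_nonneg.2 hcd)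

section ACStar

variable {a b : ℝ} {F : ℝ → ℝ} {K : Set ℝ}

lemma ACStar.mono {L : Set ℝ} (h : ACStar a b F L) (hKL : K ⊆ L) : ACStar a b F K := by
  intro ε hε
  obtain ⟨δ, hδ, hD⟩ := h ε hε
  refine ⟨δ, hδ, fun D ⟨hne, hD', hdisj⟩ hlen => hD D ⟨hne, fun p hp => ?_, hdisj⟩ hlen⟩
  obtain ⟨hle, h1, h2, hsub⟩ := hD' p hp
  exact ⟨hle, hKL h1, hKL h2, hsub⟩

lemma acStar_congr {c d : ℝ} {G : ℝ → ℝ} (hK : K ⊆ Icc c d) (hcd : Icc c d ⊆ Icc a b)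
    (hFG : EqOn F G (Icc c d)) : ACStar a b F K ↔ ACStar c d G K := by
  have hpart : ∀ D, IsPrePartition a b K D ↔ IsPrePartition c d K D := by
    refine fun D => and_congr_right fun _ => and_congr_left fun _ => forall₂_congr fun p _ => ?_
    exact ⟨fun ⟨hle, h1, h2, _⟩ => ⟨hle, h1, h2, Icc_subset_Icc (hK h1).1 (hK h2).2⟩,
      fun ⟨hle, h1, h2, hsub⟩ => ⟨hle, h1, h2, hsub.trans hcd⟩⟩
  have hosc : ∀ D, IsPrePartition c d K D →
      ∑ p ∈ D, osc F (Icc p.1 p.2) = ∑ p ∈ D, osc G (Icc p.1 p.2) := fun D hD =>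
    Finset.sum_congr rfl fun p hp => osc_congr (hFG.mono (hD.2.1 p hp).2.2.2)
  refine forall₂_congr fun ε _ => exists_congr fun δ => and_congr_right fun _ =>
    forall_congr' fun D => ?_
  rw [hpart D]
  exact ⟨fun h hD hlen => hosc D hD ▸ h hD hlen, fun h hD hlen => (hosc D hD).symm ▸ h hD hlen⟩

lemma acStar_of_lipschitzOnWith {L : NNReal} (hF : LipschitzOnWith L F (Icc a b)) (K : Set ℝ) :
    ACStar a b F K := by
  intro ε hε
  refine ⟨ε / (L + 1), by positivity, fun D hD hlen => ?_⟩
  have hosc : ∀ p ∈ D, osc F (Icc p.1 p.2) ≤ L * (p.2 - p.1) := fun p hp => by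
    obtain ⟨hle, -, -, hsub⟩ := hD.2.1 p hp
    refine osc_le (mul_nonneg L.2 (sub_nonneg.2 hle)) fun x hx y hy => ?_
    rw [← Real.dist_eq]
    exact (hF.dist_le_mul x (hsub hx) y (hsub hy)).trans
      (mul_le_mul_of_nonneg_left (Real.dist_le_of_mem_Icc hx hy) L.2)
  calc ∑ p ∈ D, osc F (Icc p.1 p.2) ≤ ∑ p ∈ D, (L + 1) * (p.2 - p.1) :=
        Finset.sum_le_sum fun p hp => (hosc p hp).trans <|
          mul_le_mul_of_nonneg_right (by linarith) (sub_nonneg.2 (hD.2.1 p hp).1)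
    _ = (L + 1) * ∑ p ∈ D, (p.2 - p.1) := (Finset.mul_sum ..).symm
    _ < (L + 1) * (ε / (L + 1)) := by gcongr
    _ = ε := by field_simp

lemma acStar_singleton (x : ℝ) : ACStar a b F {x} := by
  intro ε hε
  refine ⟨1, one_pos, fun D hD _ => ?_⟩
  have hosc : ∀ p ∈ D, osc F (Icc p.1 p.2) ≤ 0 := fun p hp => by
    obtain ⟨-, h1, h2, -⟩ := hD.2.1 p hp
    rw [mem_singleton_iff.1 h1, mem_singleton_iff.1 h2, Icc_self]
    exact osc_le le_rfl fun u hu v hv => by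
      rw [mem_singleton_iff.1 hu, mem_singleton_iff.1 hv, sub_self, abs_zero]
  exact (Finset.sum_nonpos hosc).trans_lt hε

lemma ACStar.exists_sum_osc_lt {ι : Type*} (h : ACStar a b F K) {ε : ℝ} (hε : 0 < ε) :
    ∃ δ > 0, ∀ (S : Finset ι) (u v : ι → ℝ), S.Nonempty →
      (∀ j ∈ S, u j < v j ∧ u j ∈ K ∧ v j ∈ K ∧ Icc (u j) (v j) ⊆ Icc a b) →
      (S : Set ι).Pairwise (fun i j => v i ≤ u j ∨ v j ≤ u i) →
      ∑ j ∈ S, (v j - u j) < δ → ∑ j ∈ S, osc F (Icc (u j) (v j)) < ε := by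
  obtain ⟨δ, hδ, hD⟩ := h ε hε
  refine ⟨δ, hδ, fun S u v hne huv hdisj hlen => ?_⟩
  have hinj : InjOn (fun j => (u j, v j)) S := fun i hi j hj hij => by
    by_contra hne
    have hu : u i = u j := congrArg Prod.fst hij
    rcases hdisj hi hj hne with h | h <;> linarith [(huv i hi).1, (huv j hj).1]
  have hpart : IsPrePartition a b K (S.image fun j => (u j, v j)) := by
    refine ⟨hne.image _, ?_, ?_⟩
    · simp only [Finset.forall_mem_image]
      exact fun j hj => ⟨(huv j hj).1.le, (huv j hj).2⟩
    · simp only [Finset.coe_image]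
      exact hinj.pairwise_image.2 fun i hi j hj hij => hdisj hi hj hij
  have := hD _ hpart (by rwa [Finset.sum_image hinj])
  rwa [Finset.sum_image hinj] at this

lemma mem_DF_of_tendsto (hK : IsClosed K) (hKab : K ⊆ Icc a b) {u v : ℕ → ℝ} {p : ℝ}
    (huv : ∀ j, u j < v j) (hu : ∀ j, u j ∈ K) (hv : ∀ j, v j ∈ K)
    (hdisj : Pairwise fun i j => v i ≤ u j ∨ v j ≤ u i)
    (hu_lim : Tendsto u atTop (𝓝 p)) (hv_lim : Tendsto v atTop (𝓝 p))
    (hosc : ¬ Summable fun j => osc F (Icc (u j) (v j))) : p ∈ DF a b F K := by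
  refine ⟨hK.mem_of_tendsto hu_lim (Eventually.of_forall hu), fun c d hc hd hAC => ?_⟩
  obtain ⟨δ, hδ, hsum⟩ := hAC.exists_sum_osc_lt (ι := ℕ) one_pos
  -- Beyond `J` all intervals lie within `η` of `p`, so any batch of them has total length
  -- `≤ 2η < δ`, while by divergence some batch has total oscillation `≥ 1`.
  obtain ⟨η, hη, hηδ, hηc, hηd⟩ : ∃ η > 0, η < δ / 2 ∧ c < p - η ∧ p + η < d := by
    obtain ⟨η, hη, hlt⟩ :=
      exists_between (lt_min (half_pos hδ) (lt_min (sub_pos.2 hc) (sub_pos.2 hd)))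
    simp only [lt_min_iff] at hlt
    exact ⟨η, hη, hlt.1, by linarith [hlt.2.1], by linarith [hlt.2.2]⟩
  have hnhds : Ioo (p - η) (p + η) ∈ 𝓝 p := Ioo_mem_nhds (by linarith) (by linarith)
  obtain ⟨J, hJ⟩ := eventually_atTop.1 <| (hu_lim.eventually hnhds).and (hv_lim.eventually hnhds)
  have hdiv := (not_summable_iff_tendsto_nat_atTop_of_nonneg fun j => osc_nonneg F _).1 hosc
  obtain ⟨M, hM⟩ := eventually_atTop.1 <| hdiv.eventually_ge_atTop
    (∑ j ∈ Finset.range J, osc F (Icc (u j) (v j)) + 1)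
  set S := Finset.Ico J (max M J)
  have hbig : 1 ≤ ∑ j ∈ S, osc F (Icc (u j) (v j)) := by
    rw [Finset.sum_Ico_eq_sub _ (le_max_right M J)]
    linarith [hM _ (le_max_left M J)]
  have hS : ∀ j ∈ S, u j ∈ Ioo (p - η) (p + η) ∧ v j ∈ Ioo (p - η) (p + η) :=
    fun j hj => hJ j (Finset.mem_Ico.1 hj).1
  have hcd : Ioo (p - η) (p + η) ⊆ Icc c d :=
    Ioo_subset_Icc_self.trans (Icc_subset_Icc hηc.le hηd.le)
  have hlen : ∑ j ∈ S, (v j - u j) < δ :=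
    calc ∑ j ∈ S, (v j - u j) ≤ p + η - (p - η) :=
          sum_sub_le_sub_of_pairwise _ (fun j _ => (huv j).le)
            (fun j hj => ⟨(hS j hj).1.1.le, (hS j hj).2.2.le⟩) (fun i _ j _ hij => hdisj hij)
            (by linarith)
      _ < δ := by linarith
  refine (hsum S u v (Finset.nonempty_of_sum_ne_zero (one_pos.trans_le hbig).ne')
    (fun j hj => ⟨huv j, ⟨hcd (hS j hj).1, hu j⟩, ⟨hcd (hS j hj).2, hv j⟩,
      ordConnected_Icc.out (hKab (hu j)) (hKab (hv j))⟩)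
    (fun i _ j _ hij => hdisj hij) hlen).not_ge hbig

end ACStar

section ACGStar

variable {a b : ℝ} {F : ℝ → ℝ} {K : Set ℝ}

lemma ACStar.acgStar (h : ACStar a b F K) (hK : IsClosed K) (hKab : K ⊆ Icc a b) :
    ACGStar a b F K :=
  ⟨fun _ => K, fun _ => ⟨hK, hKab, h⟩, (iUnion_const K).symm⟩

lemma ACGStar.iUnion {ι : Type*} [Countable ι] [Nonempty ι] {K : ι → Set ℝ}
    (h : ∀ i, ACGStar a b F (K i)) : ACGStar a b F (⋃ i, K i) := by
  choose C hC hK using h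
  obtain ⟨e, he⟩ := exists_surjective_nat (ι × ℕ)
  refine ⟨fun n => C (e n).1 (e n).2, fun n => hC _ _, ?_⟩
  rw [he.iUnion_comp (fun i => C i.1 i.2), iUnion_prod']
  exact iUnion_congr hK

lemma ACGStar.union {L : Set ℝ} (hK : ACGStar a b F K) (hL : ACGStar a b F L) :
    ACGStar a b F (K ∪ L) := by
  rw [union_eq_iUnion]
  exact ACGStar.iUnion fun i => by cases i <;> assumption

lemma ACGStar.congr {c d : ℝ} {G : ℝ → ℝ} (h : ACGStar c d G K) (hcd : Icc c d ⊆ Icc a b)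
    (hFG : EqOn F G (Icc c d)) : ACGStar a b F K := by
  obtain ⟨C, hC, rfl⟩ := h
  exact ⟨C, fun n => ⟨(hC n).1, (hC n).2.1.trans hcd,
    (acStar_congr (hC n).2.1 hcd hFG).2 (hC n).2.2⟩, rfl⟩

end ACGStar

section derivIter

variable {D D' : Set ℝ → Set ℝ} {K K' : Set ℝ}

@[simp] lemma derivIter_zero : derivIter D K 0 = K :=
  Ordinal.limitRecOn_zero _ _ _

@[simp] lemma derivIter_add_one (α : Ordinal.{0}) :
    derivIter D K (α + 1) = D (derivIter D K α) :=
  Ordinal.limitRecOn_add_one _ _ _ _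

lemma derivIter_of_isSuccLimit {α : Ordinal.{0}} (hα : Order.IsSuccLimit α) :
    derivIter D K α = ⋂ β : Iio α, derivIter D K β :=
  Ordinal.limitRecOn_limit _ _ _ _ hα

lemma mem_derivIter_of_forall_lt {p : ℝ} (hp : p ∈ K) {α : Ordinal.{0}}
    (h : ∀ γ < α, p ∈ D (derivIter D K γ)) : p ∈ derivIter D K α := by
  induction α using Ordinal.limitRecOn with
  | zero => rwa [derivIter_zero]
  | add_one β _ => rw [derivIter_add_one]; exact h β (Order.lt_add_one_iff.2 le_rfl)
  | limit o ho ih =>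
    rw [derivIter_of_isSuccLimit ho]
    exact mem_iInter.2 fun β => ih β.1 β.2 fun γ hγ => h γ (hγ.trans β.2)

lemma isClosed_derivIter (hD : ∀ S, IsClosed S → IsClosed (D S)) (hK : IsClosed K)
    (α : Ordinal.{0}) : IsClosed (derivIter D K α) := by
  induction α using Ordinal.limitRecOn with
  | zero => rwa [derivIter_zero]
  | add_one β ih => rw [derivIter_add_one]; exact hD _ ih
  | limit o ho ih => rw [derivIter_of_isSuccLimit ho]; exact isClosed_iInter fun β => ih β.1 β.2

lemma derivIter_subset (hD : ∀ S, D S ⊆ S) (α : Ordinal.{0}) : derivIter D K α ⊆ K := by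
  induction α using Ordinal.limitRecOn with
  | zero => rw [derivIter_zero]
  | add_one β ih => rw [derivIter_add_one]; exact (hD _).trans ih
  | limit o ho _ =>
    rw [derivIter_of_isSuccLimit ho]
    exact (iInter_subset (fun β : Iio o => derivIter D K β) ⟨0, ho.bot_lt⟩).trans
      derivIter_zero.subset

lemma derivIter_antitone (hD : ∀ S, D S ⊆ S) : Antitone (derivIter D K) := by
  intro β α hβα
  induction α using Ordinal.limitRecOn with
  | zero => rw [nonpos_iff_eq_zero.1 hβα]
  | add_one α ih =>
    rcases hβα.eq_or_lt with rfl | hlt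
    · exact subset_rfl
    · rw [derivIter_add_one]; exact (hD _).trans (ih (Order.lt_add_one_iff.1 hlt))
  | limit o ho _ =>
    rcases hβα.eq_or_lt with rfl | hlt
    · exact subset_rfl
    · rw [derivIter_of_isSuccLimit ho]
      exact iInter_subset (fun γ : Iio o => derivIter D K γ) ⟨β, hlt⟩

lemma derivIter_mono (hD : ∀ S, D S ⊆ S) (hK : K ⊆ K')
    (hDD' : ∀ S ⊆ K, ∀ T, S ⊆ T → D S ⊆ D' T) (α : Ordinal.{0}) :
    derivIter D K α ⊆ derivIter D' K' α := by
  induction α using Ordinal.limitRecOn with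
  | zero => simpa
  | add_one β ih => simpa using hDD' _ (derivIter_subset hD β) _ ih
  | limit o ho ih =>
    rw [derivIter_of_isSuccLimit ho, derivIter_of_isSuccLimit ho]
    exact iInter_mono fun β => ih β.1 β.2

end derivIter

section DF

variable {a b : ℝ} {F : ℝ → ℝ} {K : Set ℝ}

lemma DF_subset (a b : ℝ) (F : ℝ → ℝ) (K : Set ℝ) : DF a b F K ⊆ K := fun _ hx => hx.1

lemma isClosed_DF (hK : IsClosed K) : IsClosed (DF a b F K) := by
  refine isClosed_of_closure_subset fun x hx => ⟨hK.closure_subset (closure_mono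
    (DF_subset a b F K) hx), fun c d hc hd hAC => ?_⟩
  obtain ⟨y, hy, hyD⟩ := mem_closure_iff.1 hx (Ioo c d) isOpen_Ioo ⟨hc, hd⟩
  exact hyD.2 c d hy.1 hy.2 hAC

lemma derivIter_DF_subset {c d : ℝ} {G : ℝ → ℝ} (hcd : Icc c d ⊆ Icc a b)
    (hFG : EqOn F G (Icc c d)) (α : Ordinal.{0}) :
    derivIter (DF c d G) (Icc c d) α ⊆ derivIter (DF a b F) (Icc a b) α := by
  refine derivIter_mono (DF_subset c d G) hcd (fun S hS T hST x hx => ?_) α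
  refine ⟨hST hx.1, fun c' d' hc' hd' hAC => hx.2 c' d' hc' hd' ?_⟩
  have hsub : Icc c' d' ∩ S ⊆ Icc c d := inter_subset_right.trans hS
  exact (acStar_congr hsub hcd hFG).1 (hAC.mono (inter_subset_inter_right _ hST))

/-- Baire: some closed piece `Cₙ` of the `ACG_*` decomposition contains a relatively open part
of `K`, and there `F` is `AC_*`. -/
lemma DF_ne_self (hF : ACGStar a b F (Icc a b)) (hK : IsClosed K) (hKab : K ⊆ Icc a b)
    (hne : K.Nonempty) : DF a b F K ≠ K := by
  intro hfix
  obtain ⟨C, hC, hcover⟩ := hF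
  have : CompleteSpace K := hK.completeSpace_coe
  have : Nonempty K := hne.to_subtype
  have hcoverK : ⋃ n, ((↑) : K → ℝ) ⁻¹' C n = univ :=
    eq_univ_of_forall fun x => by simpa [← preimage_iUnion, ← hcover] using hKab x.2
  obtain ⟨n, x, hx⟩ := nonempty_interior_of_iUnion_of_closed
    (fun n => (hC n).1.preimage continuous_subtype_val) hcoverK
  obtain ⟨U, hU, hUC⟩ := (mem_nhds_subtype K x _).1 (mem_interior_iff_mem_nhds.1 hx)
  obtain ⟨l, r, hxlr, hlr⟩ := mem_nhds_iff_exists_Ioo_subset.1 hU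
  have hx : (x : ℝ) ∈ DF a b F K := hfix.symm ▸ x.2
  refine hx.2 ((l + x) / 2) ((x + r) / 2) (by linarith [hxlr.1]) (by linarith [hxlr.2]) <|
    (hC n).2.2.mono fun z ⟨hz, hzK⟩ => @hUC ⟨z, hzK⟩ (hlr ?_)
  exact ⟨by linarith [hz.1, hxlr.1], by linarith [hz.2, hxlr.2]⟩

lemma derivIter_DF_eq_empty (hF : ACGStar a b F (Icc a b)) {β : Ordinal.{0}}
    (hβ : derivIter (DF a b F) (Icc a b) β = derivIter (DF a b F) (Icc a b) (β + 1)) :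
    derivIter (DF a b F) (Icc a b) β = ∅ := by
  refine not_nonempty_iff_eq_empty.1 fun hne => DF_ne_self hF
    (isClosed_derivIter (fun _ => isClosed_DF) isClosed_Icc β)
    (derivIter_subset (DF_subset a b F) β) hne ?_
  rw [← derivIter_add_one (D := DF a b F), ← hβ]

end DF

structure IsDenjoyBump (a b r : ℝ) (f F : ℝ → ℝ) : Prop where
  hasDenjoyIntegralFn : HasDenjoyIntegralFn a b f F
  apply_right : F b = 0
  integrand_left : f a = 0
  integrand_right : f b = 0
  mapsTo : MapsTo F (Icc a b) (Icc 0 r)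
  exists_apply_eq : ∃ x ∈ Icc a b, F x = r

namespace IsDenjoyBump

variable {a b r : ℝ} {f F : ℝ → ℝ}

lemma apply_left (h : IsDenjoyBump a b r f F) : F a = 0 := h.hasDenjoyIntegralFn.2.1

lemma continuousOn (h : IsDenjoyBump a b r f F) : ContinuousOn F (Icc a b) :=
  h.hasDenjoyIntegralFn.1

lemma nonneg (h : IsDenjoyBump a b r f F) : 0 ≤ r := by
  obtain ⟨x, hx, hFx⟩ := h.exists_apply_eq
  exact hFx ▸ (h.mapsTo hx).1

lemma abs_le (h : IsDenjoyBump a b r f F) {x : ℝ} (hx : x ∈ Icc a b) : |F x| ≤ r := by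
  rw [abs_of_nonneg (h.mapsTo hx).1]
  exact (h.mapsTo hx).2

lemma osc_eq (h : IsDenjoyBump a b r f F) : osc F (Icc a b) = r := by
  obtain ⟨x, hx, hFx⟩ := h.exists_apply_eq
  have hbound : ∀ u ∈ Icc a b, ∀ v ∈ Icc a b, |F u - F v| ≤ r := fun u hu v hv =>
    (abs_sub_le_of_le_of_le (h.mapsTo hu).1 (h.mapsTo hu).2 (h.mapsTo hv).1 (h.mapsTo hv).2).trans
      (by linarith)
  refine le_antisymm (osc_le h.nonneg hbound) ?_
  have := le_osc hbound hx (left_mem_Icc.2 (hx.1.trans hx.2))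
  rwa [hFx, h.apply_left, sub_zero, abs_of_nonneg h.nonneg] at this

end IsDenjoyBump

lemma exists_isDenjoyBump {a b r : ℝ} (hab : a < b) (hr : 0 ≤ r) :
    ∃ f F : ℝ → ℝ, IsDenjoyBump a b r f F := by
  have hba : 0 < b - a := sub_pos.2 hab
  set u : ℝ → ℝ := fun x => π * (x - a) / (b - a) with hu
  set C := 2 * r * (π / (b - a))
  have hC : 0 ≤ C := by have := div_pos pi_pos hba; positivity
  have hderiv : ∀ x, HasDerivAt (fun x => r * sin (u x) ^ 2) (C * sin (u x) * cos (u x)) x := by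
    intro x
    have hu' : HasDerivAt u (π / (b - a)) x := by
      simpa using (((hasDerivAt_id x).sub_const a).const_mul π).div_const (b - a)
    exact ((hu'.sin.pow 2).const_mul r).congr_deriv (by norm_num; ring)
  have hlip : LipschitzWith C.toNNReal (fun x => r * sin (u x) ^ 2) := by
    refine lipschitzWith_of_nnnorm_deriv_le (fun x => (hderiv x).differentiableAt) fun x => ?_
    rw [← NNReal.coe_le_coe, coe_nnnorm, (hderiv x).deriv, Real.coe_toNNReal _ hC,
      Real.norm_eq_abs, abs_mul, abs_mul, abs_of_nonneg hC, mul_assoc]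
    exact mul_le_of_le_one_right hC <|
      mul_le_one₀ (abs_sin_le_one _) (abs_nonneg _) (abs_cos_le_one _)
  have hua : u a = 0 := by simp [hu]
  have hub : u b = π := by simp only [hu]; rw [mul_div_assoc, div_self hba.ne', mul_one]
  have hum : u ((a + b) / 2) = π / 2 := by
    simp only [hu]
    rw [div_eq_iff hba.ne']
    ring
  refine ⟨_, _, ⟨⟨hlip.continuous.continuousOn, by simp [hua],
    (acStar_of_lipschitzOnWith hlip.lipschitzOnWith _).acgStar isClosed_Icc subset_rfl,
    Eventually.of_forall hderiv⟩, by simp [hub], by simp [hua], by simp [hub], fun x _ =>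
    ⟨by positivity, mul_le_of_le_one_right hr (sin_sq_le_one _)⟩,
    ⟨(a + b) / 2, ⟨by linarith, by linarith⟩, by simp [hum]⟩⟩⟩

def glue (φ : ℤ → ℝ) (G : ℤ → ℝ → ℝ) (x : ℝ) : ℝ :=
  if h : ∃ n, x ∈ Ico (φ n) (φ (n + 1)) then G h.choose x else 0

section glue

variable {a b r : ℝ} {φ ρ : ℤ → ℝ} {g G : ℤ → ℝ → ℝ} {x : ℝ}

lemma glue_of_mem (hφ : Monotone φ) {n : ℤ} (hx : x ∈ Ico (φ n) (φ (n + 1))) :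
    glue φ G x = G n x := by
  have h : ∃ n, x ∈ Ico (φ n) (φ (n + 1)) := ⟨n, hx⟩
  have hdisj := hφ.pairwise_disjoint_on_Ico_succ
  simp only [Order.succ_eq_add_one] at hdisj
  rw [glue, dif_pos h, hdisj.eq (not_disjoint_iff.2 ⟨x, h.choose_spec, hx⟩)]

lemma glue_of_forall_notMem (hx : ∀ n, x ∉ Ico (φ n) (φ (n + 1))) : glue φ G x = 0 :=
  dif_neg fun ⟨n, hn⟩ => hx n hn

lemma eqOn_glue (hφ : StrictMono φ) (hG₀ : ∀ n, G n (φ n) = 0)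
    (hG₁ : ∀ n, G n (φ (n + 1)) = 0) (n : ℤ) :
    EqOn (glue φ G) (G n) (Icc (φ n) (φ (n + 1))) := by
  intro x hx
  rcases hx.2.lt_or_eq with hlt | rfl
  · exact glue_of_mem hφ.monotone ⟨hx.1, hlt⟩
  · rw [glue_of_mem hφ.monotone ⟨le_rfl, hφ (lt_add_one _)⟩, hG₀, hG₁]

lemma continuousOn_glue (hφ : StrictMono φ)
    (hG : ∀ n, IsDenjoyBump (φ n) (φ (n + 1)) (ρ n) (g n) (G n)) (n : ℤ) :
    ContinuousOn (glue φ G) (Icc (φ n) (φ (n + 1))) :=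
  (hG n).continuousOn.congr <| eqOn_glue hφ (fun n => (hG n).apply_left)
    (fun n => (hG n).apply_right) n

lemma continuousAt_glue_of_mem (hφ : StrictMono φ)
    (hG : ∀ n, IsDenjoyBump (φ n) (φ (n + 1)) (ρ n) (g n) (G n)) {n : ℤ}
    (hx : x ∈ Ico (φ n) (φ (n + 1))) : ContinuousAt (glue φ G) x := by
  have hcont := (continuousOn_glue hφ hG (n - 1)).union_of_isClosed
    (continuousOn_glue hφ hG n) isClosed_Icc isClosed_Icc
  rw [sub_add_cancel] at hcont
  refine hcont.continuousAt (mem_of_superset (Ioo_mem_nhds (hφ (sub_one_lt n) |>.trans_le hx.1)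
    hx.2) fun y hy => ?_)
  rcases le_total y (φ n) with h | h
  exacts [Or.inl ⟨hy.1.le, h⟩, Or.inr ⟨h, hy.2.le⟩]

/-- Near a point outside all the pieces, only pieces of small height are met. -/
lemma continuousAt_glue_of_forall_notMem (hφ : StrictMono φ)
    (hG : ∀ n, IsDenjoyBump (φ n) (φ (n + 1)) (ρ n) (g n) (G n))
    (hρ : Tendsto ρ cofinite (𝓝 0)) (hx : ∀ n, x ∉ Icc (φ n) (φ (n + 1))) :
    ContinuousAt (glue φ G) x := by
  rw [ContinuousAt, glue_of_forall_notMem fun n hn => hx n (Ico_subset_Icc_self hn),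
    Metric.tendsto_nhds]
  intro ε hε
  have hS : {n | ¬ ρ n < ε}.Finite := eventually_cofinite.1 (hρ.eventually (gt_mem_nhds hε))
  filter_upwards [hS.eventually_all.2 fun n _ => isClosed_Icc.isOpen_compl.mem_nhds (hx n)]
    with y hy
  rw [Real.dist_eq, sub_zero]
  by_cases h : ∃ n, y ∈ Ico (φ n) (φ (n + 1))
  · obtain ⟨n, hn⟩ := h
    rw [glue_of_mem hφ.monotone hn]
    refine ((hG n).abs_le (Ico_subset_Icc_self hn)).trans_lt ?_
    by_contra hρn
    exact hy n hρn (Ico_subset_Icc_self hn)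
  · rwa [glue_of_forall_notMem (not_exists.1 h), abs_zero]

lemma continuous_glue (hφ : StrictMono φ) (hφab : ∀ n, φ n ∈ Ioo a b)
    (hcover : ∀ x ∈ Ioo a b, ∃ n, x ∈ Ico (φ n) (φ (n + 1)))
    (hG : ∀ n, IsDenjoyBump (φ n) (φ (n + 1)) (ρ n) (g n) (G n))
    (hρ : Tendsto ρ cofinite (𝓝 0)) : Continuous (glue φ G) := by
  refine continuous_iff_continuousAt.2 fun x => ?_
  by_cases hx : x ∈ Ioo a b
  · obtain ⟨n, hn⟩ := hcover x hx
    exact continuousAt_glue_of_mem hφ hG hn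
  · refine continuousAt_glue_of_forall_notMem hφ hG hρ fun n hn => hx ?_
    exact ⟨(hφab n).1.trans_le hn.1, hn.2.trans_lt (hφab (n + 1)).2⟩

lemma acgStar_glue (hφ : StrictMono φ) (hφab : ∀ n, φ n ∈ Ioo a b)
    (hcover : ∀ x ∈ Ioo a b, ∃ n, x ∈ Ico (φ n) (φ (n + 1)))
    (hG : ∀ n, IsDenjoyBump (φ n) (φ (n + 1)) (ρ n) (g n) (G n)) :
    ACGStar a b (glue φ G) (Icc a b) := by
  have hab : a ≤ b := (hφab 0).1.le.trans (hφab 0).2.le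
  have hpiece : ∀ n, Icc (φ n) (φ (n + 1)) ⊆ Icc a b := fun n =>
    Icc_subset_Icc (hφab n).1.le (hφab (n + 1)).2.le
  have hIcc : Icc a b = ({a} ∪ {b}) ∪ ⋃ n, Icc (φ n) (φ (n + 1)) := by
    refine Subset.antisymm (fun x hx => ?_) (union_subset (union_subset (by simpa using hab)
      (by simpa using hab)) (iUnion_subset hpiece))
    rcases hx.1.eq_or_lt with rfl | hax
    · exact Or.inl (Or.inl rfl)
    rcases hx.2.eq_or_lt with rfl | hxb
    · exact Or.inl (Or.inr rfl)
    obtain ⟨n, hn⟩ := hcover x ⟨hax, hxb⟩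
    exact Or.inr (mem_iUnion.2 ⟨n, Ico_subset_Icc_self hn⟩)
  rw [hIcc]
  refine (((acStar_singleton a).acgStar isClosed_singleton (by simpa using hab)).union
    ((acStar_singleton b).acgStar isClosed_singleton (by simpa using hab))).union
    (ACGStar.iUnion fun n => ?_)
  exact (hG n).hasDenjoyIntegralFn.2.2.1.congr (hpiece n)
    (eqOn_glue hφ (fun n => (hG n).apply_left) (fun n => (hG n).apply_right) n)

/-- Off the countable set of endpoints, every point of `(a, b)` is interior to a piece. -/
lemma ae_hasDerivAt_glue (hφ : StrictMono φ)
    (hcover : ∀ x ∈ Ioo a b, ∃ n, x ∈ Ico (φ n) (φ (n + 1)))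
    (hG : ∀ n, IsDenjoyBump (φ n) (φ (n + 1)) (ρ n) (g n) (G n)) :
    ∀ᵐ x ∂(volume.restrict (Icc a b)), HasDerivAt (glue φ G) (glue φ g x) x := by
  have hpieces : ∀ᵐ x, ∀ n, x ∈ Icc (φ n) (φ (n + 1)) → HasDerivAt (G n) (g n x) x :=
    ae_all_iff.2 fun n => (ae_restrict_iff' measurableSet_Icc).1 (hG n).hasDenjoyIntegralFn.2.2.2
  have hends : ∀ᵐ x, x ∉ insert a (insert b (range φ)) :=
    (((countable_range φ).insert b).insert a).ae_notMem volume
  rw [ae_restrict_iff' measurableSet_Icc]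
  filter_upwards [hpieces, hends] with x hder hx hxab
  simp only [mem_insert_iff, mem_range, not_or, not_exists] at hx
  obtain ⟨n, hn⟩ := hcover x ⟨hxab.1.lt_of_ne' hx.1, hxab.2.lt_of_ne hx.2.1⟩
  have hxn : x ∈ Ioo (φ n) (φ (n + 1)) := ⟨hn.1.lt_of_ne (hx.2.2 n), hn.2⟩
  rw [glue_of_mem hφ.monotone hn]
  exact (hder n (Ioo_subset_Icc_self hxn)).congr_of_eventuallyEq <|
    (eqOn_glue hφ (fun n => (hG n).apply_left) (fun n => (hG n).apply_right) n).eventuallyEq_of_mem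
      (Icc_mem_nhds hxn.1 hxn.2)

lemma isDenjoyBump_glue (hφ : StrictMono φ) (hφab : ∀ n, φ n ∈ Ioo a b)
    (hcover : ∀ x ∈ Ioo a b, ∃ n, x ∈ Ico (φ n) (φ (n + 1)))
    (hG : ∀ n, IsDenjoyBump (φ n) (φ (n + 1)) (ρ n) (g n) (G n))
    (hρ : Tendsto ρ cofinite (𝓝 0)) (hρr : ∀ n, ρ n ≤ r) (hr : ∃ n, ρ n = r) :
    IsDenjoyBump a b r (glue φ g) (glue φ G) := by
  have hout : ∀ {H : ℤ → ℝ → ℝ} {x : ℝ}, x ∉ Ioo a b → glue φ H x = 0 := fun hx =>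
    glue_of_forall_notMem fun n hn =>
      hx ⟨(hφab n).1.trans_le hn.1, hn.2.trans (hφab (n + 1)).2⟩
  have ha : a ∉ Ioo a b := fun h => h.1.false
  have hb : b ∉ Ioo a b := fun h => h.2.false
  obtain ⟨n₀, rfl⟩ := hr
  refine ⟨⟨(continuous_glue hφ hφab hcover hG hρ).continuousOn, hout ha,
    acgStar_glue hφ hφab hcover hG, ae_hasDerivAt_glue hφ hcover hG⟩, hout hb, hout ha, hout hb,
    fun x hx => ?_, ?_⟩
  · by_cases h : ∃ n, x ∈ Ico (φ n) (φ (n + 1))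
    · obtain ⟨n, hn⟩ := h
      rw [glue_of_mem hφ.monotone hn]
      exact Icc_subset_Icc_right (hρr n) ((hG n).mapsTo (Ico_subset_Icc_self hn))
    · rw [glue_of_forall_notMem (not_exists.1 h)]
      exact ⟨le_rfl, (hG n₀).nonneg⟩
  · obtain ⟨x, hx, hGx⟩ := (hG n₀).exists_apply_eq
    refine ⟨x, Icc_subset_Icc (hφab n₀).1.le (hφab (n₀ + 1)).2.le hx, ?_⟩
    rw [eqOn_glue hφ (fun n => (hG n).apply_left) (fun n => (hG n).apply_right) n₀ hx, hGx]

lemma mem_DF_glue {K : Set ℝ} (hφ : StrictMono φ) (hK : IsClosed K) (hKab : K ⊆ Icc a b)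
    (hG : ∀ n, IsDenjoyBump (φ n) (φ (n + 1)) (ρ n) (g n) (G n)) {s : ℕ → ℤ}
    (hs : Function.Injective s) (hsK : ∀ j, φ (s j) ∈ K ∧ φ (s j + 1) ∈ K) {p : ℝ}
    (hlim₀ : Tendsto (fun j => φ (s j)) atTop (𝓝 p))
    (hlim₁ : Tendsto (fun j => φ (s j + 1)) atTop (𝓝 p)) (hρ : ¬ Summable fun j => ρ (s j)) :
    p ∈ DF a b (glue φ G) K := by
  refine mem_DF_of_tendsto hK hKab (fun j => hφ (lt_add_one _)) (fun j => (hsK j).1)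
    (fun j => (hsK j).2) (fun j k hjk => ?_) hlim₀ hlim₁ ?_
  · rcases (hs.ne hjk).lt_or_gt with hlt | hlt
    exacts [Or.inl (hφ.monotone hlt), Or.inr (hφ.monotone hlt)]
  · have hosc : ∀ n, osc (glue φ G) (Icc (φ n) (φ (n + 1))) = ρ n := fun n =>
      (osc_congr (eqOn_glue hφ (fun n => (hG n).apply_left) (fun n => (hG n).apply_right) n)).trans
        (hG n).osc_eq
    simpa only [hosc] using hρ

end glue

/-- Its values at the integers cut `(a, b)` into intervals accumulating only at `a` and `b`. -/
def tile (a b s : ℝ) : ℝ := (a + b) / 2 + (b - a) / π * arctan s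

section tile

variable {a b : ℝ}

lemma tile_strictMono (hab : a < b) : StrictMono (tile a b) := fun s t hst => by
  have : 0 < (b - a) / π := div_pos (sub_pos.2 hab) pi_pos
  unfold tile
  gcongr

lemma tile_eq_add_mul (a b s : ℝ) :
    tile a b s = (a + b) / 2 + (b - a) / 2 * (arctan s / (π / 2)) := by
  unfold tile
  field_simp

lemma tile_mem_Ioo (hab : a < b) (s : ℝ) : tile a b s ∈ Ioo a b := by
  have h := arctan_mem_Ioo s
  have hs : arctan s / (π / 2) ∈ Ioo (-1) 1 := by
    rw [mem_Ioo, lt_div_iff₀ (by positivity), div_lt_iff₀ (by positivity)]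
    constructor <;> linarith [h.1, h.2]
  rw [tile_eq_add_mul]
  constructor <;> nlinarith [hs.1, hs.2]

lemma tendsto_tile_atBot : Tendsto (tile a b) atBot (𝓝 a) := by
  have := ((tendsto_arctan_atBot.mono_right nhdsWithin_le_nhds).div_const (π / 2)).const_mul
    ((b - a) / 2) |>.const_add ((a + b) / 2)
  rw [neg_div, div_self (by positivity)] at this
  convert this using 2 with s
  · exact tile_eq_add_mul a b s
  · ring

lemma tendsto_tile_atTop : Tendsto (tile a b) atTop (𝓝 b) := by
  have := ((tendsto_arctan_atTop.mono_right nhdsWithin_le_nhds).div_const (π / 2)).const_mul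
    ((b - a) / 2) |>.const_add ((a + b) / 2)
  rw [div_self (by positivity)] at this
  convert this using 2 with s
  · exact tile_eq_add_mul a b s
  · ring

lemma exists_mem_Ico_tile (hab : a < b) {x : ℝ} (hx : x ∈ Ioo a b) :
    ∃ n : ℤ, x ∈ Ico (tile a b n) (tile a b ↑(n + 1)) := by
  have hba : 0 < b - a := sub_pos.2 hab
  set t := (x - (a + b) / 2) / ((b - a) / 2)
  have ht : t ∈ Ioo (-1) 1 := by
    rw [mem_Ioo, lt_div_iff₀ (by positivity), div_lt_iff₀ (by positivity)]
    constructor <;> linarith [hx.1, hx.2]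
  have hθ : t * (π / 2) ∈ Ioo (-(π / 2)) (π / 2) :=
    ⟨by nlinarith [ht.1, pi_pos], by nlinarith [ht.2, pi_pos]⟩
  have htile : tile a b (tan (t * (π / 2))) = x := by
    rw [tile_eq_add_mul, arctan_tan hθ.1 hθ.2, mul_div_cancel_right₀ _ (by positivity)]
    simp only [t]
    field_simp
    ring
  refine ⟨⌊tan (t * (π / 2))⌋, ?_, ?_⟩
  · exact htile ▸ (tile_strictMono hab).monotone (Int.floor_le _)
  · exact htile ▸ (tile_strictMono hab) (by push_cast; exact Int.lt_floor_add_one _)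

end tile

/-- For fixed `i`, the heights of the pieces `n = ± pair i j` form a divergent harmonic series
in `j`; still, the heights tend to `0`. -/
def height (r : ℝ) (n : ℤ) : ℝ :=
  r / ((n.natAbs.unpair.1 + 1) * (n.natAbs.unpair.2 + 1) : ℕ)

section height

variable {r : ℝ}

lemma height_pos (hr : 0 < r) (n : ℤ) : 0 < height r n := by
  unfold height
  positivity

lemma height_le (hr : 0 ≤ r) (n : ℤ) : height r n ≤ r :=
  div_le_self hr (by exact_mod_cast Nat.one_le_iff_ne_zero.2 (by positivity))

@[simp] lemma height_zero : height r 0 = r := by simp [height]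

lemma tendsto_height (r : ℝ) : Tendsto (height r) cofinite (𝓝 0) := by
  refine (tendsto_const_div_atTop_nhds_zero_nat r).comp (tendsto_atTop.2 fun N => ?_)
  refine eventually_cofinite.2 <|
    (finite_Icc (-((N ^ 2 : ℕ) : ℤ)) (N ^ 2 : ℕ)).subset fun n hn => ?_
  set i := n.natAbs.unpair.1
  set j := n.natAbs.unpair.2
  have hlt : (i + 1) * (j + 1) < N := not_le.1 hn
  have hmax : max i j + 1 ≤ N := max_add_add_right i j 1 ▸ max_le
    (lt_of_le_of_lt (Nat.le_mul_of_pos_right _ j.succ_pos) hlt).le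
    (lt_of_le_of_lt (Nat.le_mul_of_pos_left _ i.succ_pos) hlt).le
  have habs : n.natAbs < N ^ 2 := by
    have := Nat.pair_lt_max_add_one_sq i j
    rw [Nat.pair_unpair] at this
    exact this.trans_le (Nat.pow_le_pow_left hmax 2)
  generalize N ^ 2 = M at habs
  simp only [mem_Icc]
  omega

lemma not_summable_height (hr : 0 < r) (i : ℕ) {s : ℕ → ℤ}
    (hs : ∀ j, (s j).natAbs = Nat.pair i j) : ¬ Summable fun j => height r (s j) := by
  have heq : (fun j => height r (s j)) = fun j : ℕ => r / (i + 1) * (1 / ((j + 1 : ℕ) : ℝ)) := by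
    ext j
    simp only [height, hs, Nat.unpair_pair]
    push_cast
    field_simp
  rw [heq, summable_mul_left_iff (by positivity),
    summable_nat_add_iff (f := fun n : ℕ => 1 / (n : ℝ)) 1]
  exact Real.not_summable_one_div_natCast

end height

def HasBumpsOfRank (α : Ordinal.{0}) : Prop :=
  ∀ ⦃a b r : ℝ⦄, a < b → 0 < r → ∃ f F : ℝ → ℝ, IsDenjoyBump a b r f F ∧
    a ∈ derivIter (DF a b F) (Icc a b) α ∧ b ∈ derivIter (DF a b F) (Icc a b) α

lemma hasBumpsOfRank_zero : HasBumpsOfRank 0 := fun a b r hab hr => by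
  obtain ⟨f, F, hF⟩ := exists_isDenjoyBump hab hr.le
  exact ⟨f, F, hF, by simpa using hab.le, by simpa using hab.le⟩

lemma endpoints_mem_DF_glue_tile {a b r : ℝ} (hab : a < b) (hr : 0 < r) {g G : ℤ → ℝ → ℝ}
    {rank : ℤ → Ordinal.{0}}
    (hG : ∀ n : ℤ, IsDenjoyBump (tile a b n) (tile a b ↑(n + 1)) (height r n) (g n) (G n))
    (hG₀ : ∀ n : ℤ, tile a b n ∈ derivIter (DF (tile a b n) (tile a b ↑(n + 1)) (G n))
      (Icc (tile a b n) (tile a b ↑(n + 1))) (rank n))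
    (hG₁ : ∀ n : ℤ, tile a b ↑(n + 1) ∈ derivIter (DF (tile a b n) (tile a b ↑(n + 1)) (G n))
      (Icc (tile a b n) (tile a b ↑(n + 1))) (rank n))
    {i : ℕ} {γ : Ordinal.{0}} (hrank : ∀ n : ℤ, n.natAbs.unpair.1 = i → rank n = γ) :
    a ∈ DF a b (glue (fun n : ℤ => tile a b n) G)
      (derivIter (DF a b (glue (fun n : ℤ => tile a b n) G)) (Icc a b) γ) ∧
    b ∈ DF a b (glue (fun n : ℤ => tile a b n) G)
      (derivIter (DF a b (glue (fun n : ℤ => tile a b n) G)) (Icc a b) γ) := by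
  set φ : ℤ → ℝ := fun n => tile a b n
  set F := glue φ G
  have hφ : StrictMono φ := (tile_strictMono hab).comp Int.cast_strictMono
  have heq := eqOn_glue hφ (fun n => (hG n).apply_left) (fun n => (hG n).apply_right)
  have key : ∀ (p : ℝ) (s : ℕ → ℤ), Function.Injective s →
      (∀ j, (s j).natAbs = Nat.pair i j) → Tendsto (fun j => φ (s j)) atTop (𝓝 p) →
      Tendsto (fun j => φ (s j + 1)) atTop (𝓝 p) →
      p ∈ DF a b F (derivIter (DF a b F) (Icc a b) γ) := by
    intro p s hs hsi hlim₀ hlim₁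
    have hsub : ∀ n, derivIter (DF (φ n) (φ (n + 1)) (G n)) (Icc (φ n) (φ (n + 1))) (rank n) ⊆
        derivIter (DF a b F) (Icc a b) (rank n) := fun n => derivIter_DF_subset
      (Icc_subset_Icc (tile_mem_Ioo hab n).1.le (tile_mem_Ioo hab _).2.le) (heq n) _
    have hrank' : ∀ j, rank (s j) = γ := fun j => hrank _ (by rw [hsi, Nat.unpair_pair])
    exact mem_DF_glue hφ (isClosed_derivIter (fun _ => isClosed_DF) isClosed_Icc _)
      (derivIter_subset (DF_subset a b F) _) hG hs
      (fun j => hrank' j ▸ ⟨hsub _ (hG₀ (s j)), hsub _ (hG₁ (s j))⟩) hlim₀ hlim₁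
      (not_summable_height hr i hsi)
  have hpair : Tendsto (fun j => (Nat.pair i j : ℤ)) atTop atTop :=
    tendsto_natCast_atTop_atTop.comp (tendsto_atTop_mono (Nat.right_le_pair i) tendsto_id)
  have hneg := tendsto_neg_atTop_atBot.comp hpair
  constructor
  · refine key a (fun j => -(Nat.pair i j : ℤ)) (fun j k hjk => by simpa using hjk)
      (fun j => by simp) ?_ ?_
    · exact tendsto_tile_atBot.comp (tendsto_intCast_atBot_iff.2 hneg)
    · exact tendsto_tile_atBot.comp (tendsto_intCast_atBot_iff.2
        (tendsto_atBot_add_const_right _ 1 hneg))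
  · refine key b (fun j => (Nat.pair i j : ℤ)) (fun j k hjk => by simpa using hjk)
      (fun j => by simp) ?_ ?_
    · exact tendsto_tile_atTop.comp (tendsto_intCast_atTop_iff.2 hpair)
    · exact tendsto_tile_atTop.comp (tendsto_intCast_atTop_iff.2
        (tendsto_atTop_add_const_right _ 1 hpair))

lemma HasBumpsOfRank.of_forall_lt {α : Ordinal.{0}} (hα : α.card ≤ Cardinal.aleph0)
    (hα₀ : α ≠ 0) (h : ∀ γ < α, HasBumpsOfRank γ) : HasBumpsOfRank α := by
  intro a b r hab hr
  obtain ⟨e, he⟩ : ∃ e : ℕ → Iio α, Function.Surjective e := by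
    have : Countable (Iio α) := by
      rw [← Cardinal.mk_le_aleph0_iff, Cardinal.mk_Iio_ordinal, ← Cardinal.lift_aleph0.{1, 0}]
      exact Cardinal.lift_le.2 hα
    have : Nonempty (Iio α) := ⟨⟨0, pos_iff_ne_zero.2 hα₀⟩⟩
    exact exists_surjective_nat _
  have hφ : StrictMono fun n : ℤ => tile a b n := (tile_strictMono hab).comp Int.cast_strictMono
  choose g G hG hG₀ hG₁ using fun n : ℤ =>
    h (e n.natAbs.unpair.1) (e _).2 (hφ (lt_add_one n)) (height_pos hr n)
  refine ⟨_, _, isDenjoyBump_glue hφ (fun n => tile_mem_Ioo hab n)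
    (fun x hx => exists_mem_Ico_tile hab hx) hG (tendsto_height r) (height_le hr.le)
    ⟨0, height_zero⟩, ?_⟩
  constructor <;> refine mem_derivIter_of_forall_lt (by simpa using hab.le) fun γ hγ => ?_ <;>
    obtain ⟨i, hi⟩ := he ⟨γ, hγ⟩
  exacts [(endpoints_mem_DF_glue_tile hab hr hG hG₀ hG₁ fun n hn => by rw [hn, hi]).1,
    (endpoints_mem_DF_glue_tile hab hr hG hG₀ hG₁ fun n hn => by rw [hn, hi]).2]

lemma hasBumpsOfRank {α : Ordinal.{0}} (hα : α.card ≤ Cardinal.aleph0) : HasBumpsOfRank α := by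
  induction α using WellFoundedLT.induction with
  | _ α ih =>
    rcases eq_or_ne α 0 with rfl | hα₀
    · exact hasBumpsOfRank_zero
    · exact .of_forall_lt hα hα₀ fun γ hγ =>
        ih γ hγ ((Ordinal.card_le_card hγ.le).trans hα)

/-- There are Denjoy integrable functions whose derivative `D_F` vanishes only at
arbitrarily high countable ordinals. -/
theorem exists_denjoy_high_rank (α : Ordinal.{0}) (hα : α.card ≤ Cardinal.aleph0)
    (a b : ℝ) (hab : a < b) (r : ℝ) (hr : 0 < r) :
    (∃ f F : ℝ → ℝ, HasDenjoyIntegralFn a b f F ∧ F b = 0 ∧ f a = 0 ∧ f b = 0 ∧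
      osc F (Icc a b) = r ∧
      a ∈ derivIter (DF a b F) (Icc a b) α ∧ b ∈ derivIter (DF a b F) (Icc a b) α) ∧
    (∃ f F : ℝ → ℝ, HasDenjoyIntegralFn a b f F ∧
      ∀ β : Ordinal.{0},
        derivIter (DF a b F) (Icc a b) β = derivIter (DF a b F) (Icc a b) (β + 1) →
        α < β) := by
  constructor
  · obtain ⟨f, F, hF, ha, hb⟩ := hasBumpsOfRank hα hab hr
    exact ⟨f, F, hF.hasDenjoyIntegralFn, hF.apply_right, hF.integrand_left, hF.integrand_right,
      hF.osc_eq, ha, hb⟩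
  · have hα₁ : (α + 1).card ≤ Cardinal.aleph0 := by
      rw [Ordinal.card_add, Ordinal.card_one]
      exact Cardinal.add_le_aleph0.2 ⟨hα, Cardinal.one_le_aleph0⟩
    obtain ⟨f, F, hF, ha, -⟩ := hasBumpsOfRank hα₁ hab hr
    refine ⟨f, F, hF.hasDenjoyIntegralFn, fun β hβ => not_le.1 fun hβα => ?_⟩
    have hempty := derivIter_DF_eq_empty hF.hasDenjoyIntegralFn.2.2.1 hβ
    exact hempty.subset (derivIter_antitone (DF_subset a b F) (hβα.trans le_self_add) ha)
end
end

section
/- The relation F ∈ AC*(E) is Borel on C[a,b] × K[a,b]; that is, the set {(F,E) ∈ C[a,b] × K[a,b] : F ∈ AC*(E)} is a Borel subset of the product Polish space. -/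
open MeasureTheory Set Filter

noncomputable section

attribute [local instance] Classical.propDecidable

/-- `K[a,b]`: the space of closed subsets of `[a,b]` (topologized by the Hausdorff
extended metric, which for the compact set `[a,b]` agrees with the Vietoris topology). -/
abbrev KSpace (a b : ℝ) := TopologicalSpace.Closeds (Icc a b)

/-! Failure of `AC*(E)` for a given `ε` is witnessed by finitely many non-overlapping `E`-edged
intervals of small total length on which `F` oscillates by at least `ε` in total. Recording, for
a fixed number `n` of intervals, their endpoints together with two points per interval at which
the oscillation is attained, the pairs `(F, E)` admitting such a witness form the projection of a
closed set along the compact factor `[a,b]^(4n)`, hence a closed set. Letting `ε, δ` range over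
the rationals, `AC*` is then a countable intersection of countable unions of countable
intersections of open sets. -/

open TopologicalSpace

section Oscillation

variable {F : ℝ → ℝ} {J : Set ℝ}

lemma isCompact_setOf_abs_sub (hJ : IsCompact J) (hF : ContinuousOn F J) :
    IsCompact {d : ℝ | ∃ x ∈ J, ∃ y ∈ J, d = |F x - F y|} := by
  have hset : {d : ℝ | ∃ x ∈ J, ∃ y ∈ J, d = |F x - F y|} =
      (fun z : ℝ × ℝ => |F z.1 - F z.2|) '' (J ×ˢ J) := by
    ext d
    constructor
    · rintro ⟨x, hx, y, hy, rfl⟩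
      exact ⟨(x, y), ⟨hx, hy⟩, rfl⟩
    · rintro ⟨⟨x, y⟩, ⟨hx, hy⟩, rfl⟩
      exact ⟨x, hx, y, hy, rfl⟩
  rw [hset]
  exact (hJ.prod hJ).image_of_continuousOn
    ((hF.comp continuousOn_fst fun _ hz => hz.1).sub
      (hF.comp continuousOn_snd fun _ hz => hz.2)).abs

lemma abs_sub_le_osc (hJ : IsCompact J) (hF : ContinuousOn F J) {x y : ℝ} (hx : x ∈ J)
    (hy : y ∈ J) : |F x - F y| ≤ osc F J :=
  le_csSup (isCompact_setOf_abs_sub hJ hF).bddAbove ⟨x, hx, y, hy, rfl⟩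

lemma exists_osc_eq (hJ : IsCompact J) (hF : ContinuousOn F J) (hne : J.Nonempty) :
    ∃ x ∈ J, ∃ y ∈ J, osc F J = |F x - F y| :=
  (isCompact_setOf_abs_sub hJ hF).sSup_mem (hne.elim fun x hx => ⟨_, x, hx, x, hx, rfl⟩)

end Oscillation

def IsEdgedFamily {ι α : Type*} [Preorder α] (E : Set α) (x y u v : ι → α) : Prop :=
  (∀ i, x i ∈ E ∧ y i ∈ E ∧ u i ∈ Icc (x i) (y i) ∧ v i ∈ Icc (x i) (y i)) ∧
    Pairwise fun i j => y i ≤ x j ∨ y j ≤ x i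

namespace IsEdgedFamily

variable {ι α : Type*} {E : Set α} {x y u v : ι → α}

lemma injOn_of_lt [Preorder α] (hfam : IsEdgedFamily E x y u v) :
    InjOn (fun i => (x i, y i)) {i | x i < y i} := by
  intro i (hi : x i < y i) j (hj : x j < y j) hij
  obtain ⟨hx, -⟩ := Prod.mk.inj hij
  by_contra hne
  rcases hfam.2 hne with h | h
  · exact lt_irrefl _ ((hx ▸ h).trans_lt hi)
  · exact lt_irrefl _ ((hx ▸ h).trans_lt hj)

lemma eq_of_not_lt [PartialOrder α] (hfam : IsEdgedFamily E x y u v) {i : ι}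
    (hi : ¬ x i < y i) : u i = v i := by
  obtain ⟨-, -, ⟨hxu, huy⟩, ⟨hxv, hvy⟩⟩ := hfam.1 i
  have hxy : x i = y i := (hxu.trans huy).eq_of_not_lt hi
  exact (le_antisymm (huy.trans hxy.ge) hxu).trans (le_antisymm (hvy.trans hxy.ge) hxv).symm

end IsEdgedFamily

section PrePartition

variable {a b : ℝ} (h : a ≤ b) {f : Icc a b → ℝ} {E : Set (Icc a b)}

lemma IsEdgedFamily.sum_abs_sub_lt (hf : Continuous f) {n : ℕ} {x y u v : Fin n → Icc a b}
    {δ ε : ℝ} (hAC : ∀ D, IsPrePartition a b (Subtype.val '' E) D →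
      ∑ q ∈ D, (q.2 - q.1) < δ → ∑ q ∈ D, osc (IccExtend h f) (Icc q.1 q.2) < ε)
    (hε : 0 < ε) (hfam : IsEdgedFamily E x y u v) (hlen : ∑ i, ((y i : ℝ) - x i) < δ) :
    ∑ i, |f (u i) - f (v i)| < ε := by
  set J := Finset.univ.filter fun i => x i < y i
  set D := J.image fun i => ((x i : ℝ), (y i : ℝ))
  have hinj : InjOn (fun i => ((x i : ℝ), (y i : ℝ))) J := by
    intro i hi j hj hij
    refine hfam.injOn_of_lt (by simpa [J] using hi) (by simpa [J] using hj) ?_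
    exact Prod.ext (Subtype.ext (congrArg Prod.fst hij)) (Subtype.ext (congrArg Prod.snd hij))
  have hsum_J : ∑ i ∈ J, |f (u i) - f (v i)| = ∑ i, |f (u i) - f (v i)| :=
    Finset.sum_filter_of_ne fun i _ hne => by_contra fun hlt => hne (by
      rw [hfam.eq_of_not_lt hlt, sub_self, abs_zero])
  have hle_osc : ∑ i, |f (u i) - f (v i)| ≤ ∑ q ∈ D, osc (IccExtend h f) (Icc q.1 q.2) := by
    rw [← hsum_J, Finset.sum_image hinj]
    gcongr with i
    obtain ⟨-, -, ⟨hxu, huy⟩, ⟨hxv, hvy⟩⟩ := hfam.1 i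
    rw [← IccExtend_val h f (u i), ← IccExtend_val h f (v i)]
    exact abs_sub_le_osc isCompact_Icc (hf.Icc_extend' (h := h)).continuousOn
      ⟨hxu, huy⟩ ⟨hxv, hvy⟩
  rcases D.eq_empty_or_nonempty with hD | hD
  · rw [hD, Finset.sum_empty] at hle_osc
    exact hle_osc.trans_lt hε
  refine hle_osc.trans_lt (hAC D ⟨hD, ?_, ?_⟩ (lt_of_le_of_lt ?_ hlen))
  · simp only [D, Finset.mem_image]
    rintro _ ⟨i, -, rfl⟩
    obtain ⟨hx, hy, ⟨hxu, huy⟩, -⟩ := hfam.1 i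
    exact ⟨hxu.trans huy, ⟨x i, hx, rfl⟩, ⟨y i, hy, rfl⟩,
      Icc_subset_Icc (x i).2.1 (y i).2.2⟩
  · simp only [D, Finset.coe_image]
    rintro _ ⟨i, -, rfl⟩ _ ⟨j, -, rfl⟩ hne
    exact hfam.2 fun hij => hne (hij ▸ rfl)
  · rw [Finset.sum_image hinj]
    refine Finset.sum_le_sum_of_subset_of_nonneg (Finset.filter_subset _ _) fun i _ _ => ?_
    obtain ⟨-, -, ⟨hxu, huy⟩, -⟩ := hfam.1 i
    exact sub_nonneg.2 (hxu.trans huy)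

lemma IsPrePartition.exists_osc_witnesses (hf : Continuous f) {D : Finset (ℝ × ℝ)}
    (hD : IsPrePartition a b (Subtype.val '' E) D) {q : ℝ × ℝ} (hq : q ∈ D) :
    ∃ s t u v : Icc a b, s ∈ E ∧ t ∈ E ∧ u ∈ Icc s t ∧ v ∈ Icc s t ∧
      ((s : ℝ), (t : ℝ)) = q ∧ osc (IccExtend h f) (Icc q.1 q.2) = |f u - f v| := by
  obtain ⟨hst, ⟨s, hs, hsq⟩, ⟨t, ht, htq⟩, hsub⟩ := hD.2.1 q hq
  obtain ⟨u, hu, v, hv, hosc⟩ := exists_osc_eq isCompact_Icc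
    (hf.Icc_extend' (h := h)).continuousOn (nonempty_Icc.2 hst)
  refine ⟨s, t, ⟨u, hsub hu⟩, ⟨v, hsub hv⟩, hs, ht, ?_, ?_, Prod.ext hsq htq, ?_⟩
  · exact ⟨Subtype.coe_le_coe.1 (hsq ▸ hu.1), Subtype.coe_le_coe.1 (htq ▸ hu.2)⟩
  · exact ⟨Subtype.coe_le_coe.1 (hsq ▸ hv.1), Subtype.coe_le_coe.1 (htq ▸ hv.2)⟩
  · rwa [IccExtend_of_mem h f (hsub hu), IccExtend_of_mem h f (hsub hv)] at hosc

lemma IsPrePartition.exists_isEdgedFamily (hf : Continuous f) {D : Finset (ℝ × ℝ)}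
    (hD : IsPrePartition a b (Subtype.val '' E) D) :
    ∃ n, ∃ x y u v : Fin n → Icc a b, IsEdgedFamily E x y u v ∧
      ∑ i, ((y i : ℝ) - x i) = ∑ q ∈ D, (q.2 - q.1) ∧
      ∑ i, |f (u i) - f (v i)| = ∑ q ∈ D, osc (IccExtend h f) (Icc q.1 q.2) := by
  choose s t u v hs ht hu hv hq hosc using
    fun q : D => hD.exists_osc_witnesses h hf q.2
  have hsum (g : ℝ × ℝ → ℝ) : ∑ i, g (D.equivFin.symm i) = ∑ q ∈ D, g q :=
    (D.equivFin.symm.sum_comp (g ·)).trans (D.sum_coe_sort g)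
  refine ⟨D.card, s ∘ D.equivFin.symm, t ∘ D.equivFin.symm, u ∘ D.equivFin.symm,
    v ∘ D.equivFin.symm, ⟨fun i => ⟨hs _, ht _, hu _, hv _⟩, fun i j hij => ?_⟩, ?_, ?_⟩
  · have hne : (D.equivFin.symm i : ℝ × ℝ) ≠ D.equivFin.symm j :=
      fun heq => hij (D.equivFin.symm.injective (Subtype.ext heq))
    have hpair := hD.2.2 (D.equivFin.symm i).2 (D.equivFin.symm j).2 hne
    rw [← hq, ← hq] at hpair
    simpa only [Function.comp_apply, Subtype.coe_le_coe] using hpair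
  · rw [← hsum]
    exact Finset.sum_congr rfl fun i _ => by rw [← hq (D.equivFin.symm i)]; rfl
  · rw [← hsum]
    exact Finset.sum_congr rfl fun i _ => (hosc _).symm

end PrePartition

lemma TopologicalSpace.Closeds.isClosed_setOf_mem {α : Type*} [EMetricSpace α] :
    IsClosed {p : α × Closeds α | p.1 ∈ p.2} := by
  have hset : {p : α × Closeds α | p.1 ∈ p.2} =
      {p | Metric.infEDist p.1 (p.2 : Set α) = 0} := by
    ext p
    exact Metric.mem_iff_infEDist_zero_of_closed p.2.isClosed
  rw [hset]
  exact isClosed_eq Closeds.continuous_infEDist continuous_const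

lemma isClosed_setOf_isEdgedFamily {Z ι α : Type*} [TopologicalSpace Z] [Finite ι]
    [EMetricSpace α] [Preorder α] [OrderClosedTopology α] {K : Z → Closeds α}
    {x y u v : Z → ι → α} (hK : Continuous K) (hx : Continuous x) (hy : Continuous y)
    (hu : Continuous u) (hv : Continuous v) :
    IsClosed {z | IsEdgedFamily (K z : Set α) (x z) (y z) (u z) (v z)} := by
  have hmem {w : Z → α} (hw : Continuous w) : IsClosed {z | w z ∈ (K z : Set α)} :=
    Closeds.isClosed_setOf_mem.preimage (hw.prodMk hK)
  simp only [IsEdgedFamily, Pairwise, mem_Icc, ofPred_and, ofPred_forall]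
  refine (isClosed_iInter fun i => ?_).inter
    (isClosed_iInter fun i => isClosed_iInter fun j => isClosed_iInter fun _ => ?_)
  · have hle {w w' : Z → α} (hw : Continuous w) (hw' : Continuous w') :
        IsClosed {z | w z ≤ w' z} := isClosed_le hw hw'
    exact (hmem (by fun_prop)).inter <| (hmem (by fun_prop)).inter <|
      ((hle (by fun_prop) (by fun_prop)).inter (hle (by fun_prop) (by fun_prop))).inter
      ((hle (by fun_prop) (by fun_prop)).inter (hle (by fun_prop) (by fun_prop)))
  · exact (isClosed_le (by fun_prop) (by fun_prop)).union (isClosed_le (by fun_prop) (by fun_prop))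

def badSet (a b ε δ : ℝ) (n : ℕ) : Set (C(Icc a b, ℝ) × KSpace a b) :=
  {p | ∃ x y u v : Fin n → Icc a b, IsEdgedFamily (p.2 : Set (Icc a b)) x y u v ∧
    ∑ i, ((y i : ℝ) - x i) ≤ δ ∧ ε ≤ ∑ i, |p.1 (u i) - p.1 (v i)|}

lemma isClosed_badSet (a b ε δ : ℝ) (n : ℕ) : IsClosed (badSet a b ε δ n) := by
  let S : Set ((C(Icc a b, ℝ) × KSpace a b) × (Fin n → Icc a b) × (Fin n → Icc a b) ×
      (Fin n → Icc a b) × (Fin n → Icc a b)) :=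
    {q | IsEdgedFamily (q.1.2 : Set (Icc a b)) q.2.1 q.2.2.1 q.2.2.2.1 q.2.2.2.2 ∧
      ∑ i, ((q.2.2.1 i : ℝ) - q.2.1 i) ≤ δ ∧
      ε ≤ ∑ i, |q.1.1 (q.2.2.2.1 i) - q.1.1 (q.2.2.2.2 i)|}
  have hS : IsClosed S := by
    simp only [S, ofPred_and]
    exact (isClosed_setOf_isEdgedFamily (by fun_prop) (by fun_prop) (by fun_prop) (by fun_prop)
      (by fun_prop)).inter
      ((isClosed_le (by fun_prop) continuous_const).inter
        (isClosed_le continuous_const (by fun_prop)))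
  have hbad : badSet a b ε δ n = Prod.fst '' S := by
    ext p
    simp [badSet, S]
  rw [hbad]
  exact isClosedMap_fst_of_compactSpace _ hS

lemma acStar_iff_forall_notMem_badSet {a b : ℝ} (h : a ≤ b)
    (p : C(Icc a b, ℝ) × KSpace a b) :
    ACStar a b (IccExtend h p.1) (Subtype.val '' (p.2 : Set (Icc a b))) ↔
      ∀ ε : ℚ, 0 < ε → ∃ δ : ℚ, 0 < δ ∧ ∀ n, p ∉ badSet a b ε δ n := by
  constructor
  · intro hAC ε hε
    obtain ⟨δ₀, hδ₀, hAC⟩ := hAC ε (Rat.cast_pos.2 hε)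
    obtain ⟨δ, hδ, hδδ₀⟩ := exists_rat_btwn hδ₀
    refine ⟨δ, Rat.cast_pos.1 hδ, fun n ⟨x, y, u, v, hfam, hlen, hosc⟩ => hosc.not_gt ?_⟩
    exact hfam.sum_abs_sub_lt h p.1.continuous hAC (Rat.cast_pos.2 hε) (hlen.trans_lt hδδ₀)
  · intro hbad ε hε
    obtain ⟨ε', hε', hε'ε⟩ := exists_rat_btwn hε
    obtain ⟨δ, hδ, hgood⟩ := hbad ε' (Rat.cast_pos.1 hε')
    refine ⟨δ, Rat.cast_pos.2 hδ, fun D hD hlen => ?_⟩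
    obtain ⟨n, x, y, u, v, hfam, hlen_eq, hosc_eq⟩ := hD.exists_isEdgedFamily h p.1.continuous
    refine hosc_eq ▸ lt_of_not_ge fun hge => hgood n ?_
    exact ⟨x, y, u, v, hfam, hlen_eq ▸ hlen.le, hε'ε.le.trans hge⟩

theorem ACStar_borel (a b : ℝ) (hab : a < b) :
    MeasurableSet[borel (C(Icc a b, ℝ) × KSpace a b)]
      {p : C(Icc a b, ℝ) × KSpace a b |
        ACStar a b (fun x => p.1 (projIcc a b hab.le x))
          (Subtype.val '' (p.2 : Set (Icc a b)))} := by
  have hset : {p : C(Icc a b, ℝ) × KSpace a b |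
        ACStar a b (fun x => p.1 (projIcc a b hab.le x)) (Subtype.val '' (p.2 : Set (Icc a b)))} =
      ⋂ ε : ℚ, ⋂ (_ : 0 < ε), ⋃ δ : ℚ, ⋃ (_ : 0 < δ), ⋂ n,
        (badSet a b ε δ n)ᶜ := by
    ext p
    simp only [mem_iInter, mem_iUnion, mem_compl_iff, exists_prop]
    exact acStar_iff_forall_notMem_badSet hab.le p
  rw [hset]
  exact .iInter fun ε => .iInter fun _ => .iUnion fun δ => .iUnion fun _ => .iInter fun n =>
    MeasurableSpace.measurableSet_generateFrom (isClosed_badSet a b ε δ n).isOpen_compl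
end
end
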